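/- arXiv:2504.06582 — 2 statements merged into one kernel-verified Lean document; each statement's English description precedes it below -/
import Mathlib

section
/- Let F be the 4×4 matrix with (1,1) entry βν/(σ+ν) and all other entries zero, and let V be the 4×4 lower-triangular-style matrix with diagonal entries j₁, j₂, j₃, j₄ (all positive), first column (j₁, -γ₁, -γ₂, -γ₃)ᵀ, entry (2,4) = φ₃, and all other off-diagonal entries zero. Then V is invertible and the spectral radius of F·V⁻¹ equals βν/((σ+ν)j₁). -/
/-!
Since the first row of `V` is `j₁ e₁`, the rank-one matrix `F = a E₁₁` equals `(a / j₁) E₁₁ V`,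
so `F V⁻¹ = (a / j₁) E₁₁`, a diagonal matrix whose spectrum is `{a / j₁, 0}`.
-/

open Matrix

namespace Matrix

variable {n 𝕜 : Type*} [Fintype n] [DecidableEq n]

theorem spectralRadius_diagonal [NormedField 𝕜] (d : n → 𝕜) :
    spectralRadius 𝕜 (diagonal d) = ⨆ i, (‖d i‖₊ : ENNReal) := by
  rw [spectralRadius, spectrum_diagonal, iSup_range]

theorem spectralRadius_single_self [NormedField 𝕜] (i : n) (c : 𝕜) :
    spectralRadius 𝕜 (single i i c) = ‖c‖₊ := by
  rw [← diagonal_single, spectralRadius_diagonal]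
  refine le_antisymm (iSup_le fun j => ?_) (le_iSup_of_le i (by simp))
  rcases eq_or_ne j i with rfl | hji
  · simp
  · simp [Pi.single_eq_of_ne hji]

theorem single_mul_of_row_eq_single [Semiring 𝕜] {V : Matrix n n 𝕜} {i : n} {v : 𝕜}
    (hV : V i = Pi.single i v) (c : 𝕜) : single i i c * V = single i i (c * v) := by
  ext a b
  rcases eq_or_ne a i with rfl | hai
  · rcases eq_or_ne b a with rfl | hba
    · simp [hV]
    · simp [hV, Pi.single_eq_of_ne hba, single_apply_of_col_ne _ _ hba.symm]
  · simp [hai, single_apply_of_row_ne hai.symm]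

theorem single_mul_inv_of_row_eq_single [Field 𝕜] {V : Matrix n n 𝕜} (hdet : IsUnit V.det)
    {i : n} {v : 𝕜} (hV : V i = Pi.single i v) (hv : v ≠ 0) (c : 𝕜) :
    single i i c * V⁻¹ = single i i (c / v) := by
  conv_lhs => rw [← div_mul_cancel₀ c hv, ← single_mul_of_row_eq_single hV]
  exact mul_nonsing_inv_cancel_right V _ hdet

end Matrix

theorem stmt_7_general (β σ ν γ₁ γ₂ γ₃ φ₃ j₁ j₂ j₃ j₄ : ℝ)
    (hβ : 0 ≤ β) (hν : 0 ≤ ν) (hσν : 0 < σ + ν)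
    (hj₁ : 0 < j₁) (hj₂ : 0 < j₂) (hj₃ : 0 < j₃) (hj₄ : 0 < j₄)
    (F V : Matrix (Fin 4) (Fin 4) ℝ)
    (hF : F = !![β * ν / (σ + ν), 0, 0, 0; 0, 0, 0, 0; 0, 0, 0, 0; 0, 0, 0, 0])
    (hV : V = !![j₁, 0, 0, 0; -γ₁, j₂, 0, φ₃; -γ₂, 0, j₃, 0; -γ₃, 0, 0, j₄]) :
    IsUnit V ∧ spectralRadius ℝ (F * V⁻¹) = ENNReal.ofReal (β * ν / ((σ + ν) * j₁)) := by
  have hdet : V.det = j₁ * j₂ * j₃ * j₄ := by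
    simp [hV, det_succ_row_zero, Fin.sum_univ_succ, mul_assoc]
  have hdet_unit : IsUnit V.det := by
    rw [hdet]
    exact (by positivity : 0 < j₁ * j₂ * j₃ * j₄).ne'.isUnit
  have hF_single : F = single 0 0 (β * ν / (σ + ν)) := by
    ext i j
    fin_cases i <;> fin_cases j <;> simp [hF]
  have hV_row : V 0 = Pi.single 0 j₁ := by
    ext j
    fin_cases j <;> simp [hV]
  refine ⟨(isUnit_iff_isUnit_det V).2 hdet_unit, ?_⟩
  rw [hF_single, single_mul_inv_of_row_eq_single hdet_unit hV_row hj₁.ne',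
    spectralRadius_single_self, ← enorm_eq_nnnorm, Real.enorm_of_nonneg (by positivity),
    div_div]

theorem stmt_7 (β σ ν γ₁ γ₂ γ₃ φ₃ j₁ j₂ j₃ j₄ : ℝ)
    (hβ : 0 ≤ β) (hσ : 0 ≤ σ) (hν : 0 ≤ ν) (hσν : 0 < σ + ν)
    (hj₁ : 0 < j₁) (hj₂ : 0 < j₂) (hj₃ : 0 < j₃) (hj₄ : 0 < j₄)
    (F V : Matrix (Fin 4) (Fin 4) ℝ)
    (hF : F = !![β * ν / (σ + ν), 0, 0, 0; 0, 0, 0, 0; 0, 0, 0, 0; 0, 0, 0, 0])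
    (hV : V = !![j₁, 0, 0, 0; -γ₁, j₂, 0, φ₃; -γ₂, 0, j₃, 0; -γ₃, 0, 0, j₄]) :
    IsUnit V ∧ spectralRadius ℝ (F * V⁻¹) = ENNReal.ofReal (β * ν / ((σ + ν) * j₁)) :=
  stmt_7_general β σ ν γ₁ γ₂ γ₃ φ₃ j₁ j₂ j₃ j₄ hβ hν hσν hj₁ hj₂ hj₃ hj₄ F V hF hV
end

section
/- For the Caputo positivity bound: if a function satisfies the scalar fractional inequality giving the Laplace-transform bound ℒ[S_p](s) ≥ s^{α-1}/(s^α + K)·S_p(0) with K ≥ 0 and α ∈ (0,1), then the inverse transform yields S_p(t) ≥ S_p(0)·E_α(-K t^α) for t ≥ 0, where E_α is the Mittag-Leffler function; moreover E_α(-K t^α) > 0 for all t ≥ 0 when 0 < α ≤ 1 and K ≥ 0, hence S_p(t) > 0 whenever S_p(0) > 0. -/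
/-!
`e(t) = E_α(-t ^ α)` solves the Volterra equation
`∫₀ᵗ (t - s) ^ (α - 1) e(s) ds = Γ(α) (1 - e(t))`, obtained by integrating the series termwise with
the Beta integral. For `α ≤ 1` the kernel `(t - s) ^ (α - 1)` is antitone in `t`, so at a first
point `t₀` where a solution stops being positive, `Γ(α) e(u) ≤ ∫ᵤ^{t₀} (t₀ - s) ^ (α - 1) e(s) ds`
for `u < t₀`; taking `u` a maximum point of `e` on `[t₀ - ε, t₀]` bounds the right side by
`ε ^ α / α · e(u)`, which is smaller than `Γ(α) e(u)` for small `ε`. The bound on `S_p` follows.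
-/

/-- The Mittag-Leffler function `E_α(z) = ∑ z^k / Γ(1 + α k)`. -/
noncomputable def mittagLeffler (α z : ℝ) : ℝ :=
  ∑' k : ℕ, z ^ k / Real.Gamma (1 + α * k)

open Real MeasureTheory Set

theorem Real.rpow_mul_exp_neg_le_Gamma_one_add {x C : ℝ} (hx : 0 ≤ x) (hC : 0 ≤ C) :
    C ^ x * exp (-C) ≤ Gamma (1 + x) := by
  have hint : IntegrableOn (fun t => exp (-t) * t ^ (1 + x - 1)) (Ioi 0) :=
    Real.GammaIntegral_convergent (by linarith)
  calc C ^ x * exp (-C) = ∫ t in Ioi C, C ^ x * exp (-t) := by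
        rw [integral_const_mul, integral_exp_neg_Ioi]
    _ ≤ ∫ t in Ioi C, exp (-t) * t ^ (1 + x - 1) := by
        refine setIntegral_mono_on ((integrableOn_exp_neg_Ioi C).const_mul _)
          (hint.mono_set (Ioi_subset_Ioi hC)) measurableSet_Ioi fun t ht => ?_
        rw [add_sub_cancel_left, mul_comm]
        gcongr
        exact ht.le
    _ ≤ ∫ t in Ioi 0, exp (-t) * t ^ (1 + x - 1) :=
        setIntegral_mono_set hint
          ((ae_restrict_iff' measurableSet_Ioi).2 (.of_forall fun t ht =>
            (mul_pos (exp_pos _) (rpow_pos_of_pos ht _)).le))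
          (.of_forall (Ioi_subset_Ioi hC))
    _ = Gamma (1 + x) := (Gamma_eq_integral (by linarith)).symm

theorem intervalIntegral.integral_rpow_mul_sub_rpow {a b t : ℝ} (ha : 0 < a) (hb : 0 < b)
    (ht : 0 < t) :
    ∫ s in (0:ℝ)..t, s ^ (a - 1) * (t - s) ^ (b - 1)
      = Gamma a * Gamma b / Gamma (a + b) * t ^ (a + b - 1) := by
  have hβ := Complex.betaIntegral_scaled a b ht
  rw [Complex.betaIntegral_eq_Gamma_mul_div _ _ (by simpa) (by simpa)] at hβ
  apply Complex.ofReal_injective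
  rw [← intervalIntegral.integral_ofReal]
  calc _ = ∫ s in (0:ℝ)..t, (s : ℂ) ^ ((a : ℂ) - 1) * ((t : ℂ) - s) ^ ((b : ℂ) - 1) := by
        refine intervalIntegral.integral_congr fun s hs => ?_
        rw [uIcc_of_le ht.le] at hs
        push_cast
        rw [Complex.ofReal_cpow hs.1, Complex.ofReal_cpow (sub_nonneg.2 hs.2)]
        norm_cast
    _ = _ := by
        rw [hβ, Complex.ofReal_mul, Complex.ofReal_cpow ht.le]
        push_cast
        rw [← Complex.ofReal_add, Complex.Gamma_ofReal, Complex.Gamma_ofReal, Complex.Gamma_ofReal]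
        ring

section Kernel

variable {α : ℝ} {f : ℝ → ℝ}

theorem intervalIntegrable_sub_rpow (hα : 0 < α) (t u v : ℝ) :
    IntervalIntegrable (fun s => (t - s) ^ (α - 1)) volume u v := by
  simpa using (intervalIntegral.intervalIntegrable_rpow' (a := t - u) (b := t - v)
    (r := α - 1) (by linarith)).comp_sub_left t

theorem intervalIntegrable_sub_rpow_mul (hα : 0 < α) (hf : ContinuousOn f (Ici 0)) (t : ℝ)
    {u v : ℝ} (hu : 0 ≤ u) (hv : 0 ≤ v) :
    IntervalIntegrable (fun s => (t - s) ^ (α - 1) * f s) volume u v :=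
  (intervalIntegrable_sub_rpow hα t u v).mul_continuousOn
    (hf.mono fun _ hs => le_trans (le_min hu hv) hs.1)

theorem integral_sub_rpow (hα : 0 < α) (t u : ℝ) :
    ∫ s in u..t, (t - s) ^ (α - 1) = (t - u) ^ α / α := by
  rw [intervalIntegral.integral_comp_sub_left (fun x => x ^ (α - 1)), sub_self,
    integral_rpow (Or.inl (by linarith)), sub_add_cancel, zero_rpow hα.ne', sub_zero]

theorem integral_sub_rpow_mul_le {M t u : ℝ} (hα : 0 < α) (hut : u ≤ t)
    (hf : ContinuousOn f (Icc u t)) (hM : ∀ s ∈ Icc u t, f s ≤ M) :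
    ∫ s in u..t, (t - s) ^ (α - 1) * f s ≤ (t - u) ^ α / α * M := by
  rw [← integral_sub_rpow hα, ← intervalIntegral.integral_mul_const]
  refine intervalIntegral.integral_mono_on hut
    ((intervalIntegrable_sub_rpow hα t u t).mul_continuousOn (by rwa [uIcc_of_le hut]))
    ((intervalIntegrable_sub_rpow hα t u t).mul_const M) fun s hs => ?_
  exact mul_le_mul_of_nonneg_left (hM s hs) (rpow_nonneg (sub_nonneg.2 hs.2) _)

theorem integral_sub_rpow_mul_rpow (hα : 0 < α) {β t : ℝ} (hβ : 0 ≤ β) (ht : 0 < t) :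
    ∫ s in (0:ℝ)..t, (t - s) ^ (α - 1) * s ^ β
      = Gamma α * Gamma (1 + β) / Gamma (1 + β + α) * t ^ (β + α) := by
  have h := intervalIntegral.integral_rpow_mul_sub_rpow (a := 1 + β) (by linarith) hα ht
  simp only [add_sub_cancel_left] at h
  rw [show 1 + β + α - 1 = β + α by ring] at h
  simp_rw [mul_comm ((t - _) ^ (α - 1))]
  rw [h]
  ring

end Kernel

theorem summable_pow_div_Gamma_one_add_mul {α : ℝ} (hα : 0 < α) (z : ℝ) :
    Summable fun k : ℕ => z ^ k / Gamma (1 + α * k) := by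
  -- `Γ(1 + α k) ≥ C ^ (α k) e^{-C}` with `C ^ α = |z| + 1` dominates the series by a geometric one
  set C := (|z| + 1) ^ α⁻¹
  have hC : 0 ≤ C := by positivity
  have hCα : C ^ α = |z| + 1 := rpow_inv_rpow (by positivity) hα.ne'
  have hgeo : Summable fun k : ℕ => exp C * (|z| / (|z| + 1)) ^ k :=
    (summable_geometric_of_lt_one (by positivity)
      ((div_lt_one (by positivity)).2 (lt_add_one _))).mul_left _
  refine hgeo.of_norm_bounded fun k => ?_
  have hΓ : (|z| + 1) ^ k * exp (-C) ≤ Gamma (1 + α * k) := by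
    simpa [rpow_mul hC, hCα] using
      Real.rpow_mul_exp_neg_le_Gamma_one_add (x := α * k) (by positivity) hC
  have hz : ‖z ^ k‖ = |z| ^ k := by rw [norm_pow, Real.norm_eq_abs]
  rw [norm_div, hz, Real.norm_of_nonneg (hΓ.trans' (by positivity)), div_pow,
    div_le_iff₀ (hΓ.trans_lt' (by positivity))]
  calc |z| ^ k = exp C * (|z| ^ k / (|z| + 1) ^ k) * ((|z| + 1) ^ k * exp (-C)) := by
        rw [exp_neg]; field_simp
    _ ≤ _ := by gcongr

theorem hasSum_mittagLeffler {α : ℝ} (hα : 0 < α) (z : ℝ) :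
    HasSum (fun k : ℕ => z ^ k / Gamma (1 + α * k)) (mittagLeffler α z) :=
  (summable_pow_div_Gamma_one_add_mul hα z).hasSum

theorem mittagLeffler_zero (α : ℝ) : mittagLeffler α 0 = 1 := by
  rw [mittagLeffler, tsum_eq_single 0 fun k hk => by simp [hk]]
  simp

theorem continuous_mittagLeffler {α : ℝ} (hα : 0 < α) : Continuous (mittagLeffler α) := by
  have hcont : ∀ R, ContinuousOn (mittagLeffler α) (Icc (-R) R) := fun R =>
    continuousOn_tsum (fun k => (continuous_pow k).div_const _ |>.continuousOn)
      (summable_pow_div_Gamma_one_add_mul hα R) fun k z hz => by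
        have hΓ : 0 < Gamma (1 + α * k) := Gamma_pos_of_pos (by positivity)
        rw [norm_div, norm_pow, Real.norm_of_nonneg hΓ.le, Real.norm_eq_abs]
        gcongr
        exact abs_le.2 hz
  refine continuous_iff_continuousAt.2 fun z => (hcont (|z| + 1)).continuousAt (Icc_mem_nhds ?_ ?_)
  · linarith [neg_abs_le z]
  · linarith [le_abs_self z]

theorem integral_sub_rpow_mul_mittagLeffler {α t : ℝ} (hα : 0 < α) (ht : 0 ≤ t) :
    ∫ s in (0:ℝ)..t, (t - s) ^ (α - 1) * mittagLeffler α (-s ^ α)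
      = Gamma α * (1 - mittagLeffler α (-t ^ α)) := by
  rcases ht.eq_or_lt with rfl | ht
  · simp [zero_rpow hα.ne', mittagLeffler_zero]
  have hΓ : ∀ k : ℕ, 0 < Gamma (1 + α * k) := fun k => Gamma_pos_of_pos (by positivity)
  set F : ℕ → ℝ → ℝ := fun k s => (t - s) ^ (α - 1) * ((-s ^ α) ^ k / Gamma (1 + α * k))
  have hF : ∀ k : ℕ, ∫ s in (0:ℝ)..t, F k s
      = -Gamma α * ((-t ^ α) ^ (k + 1) / Gamma (1 + α * ↑(k + 1))) := by
    intro k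
    have hk : 0 ≤ α * k := by positivity
    calc ∫ s in (0:ℝ)..t, F k s
        = (-1) ^ k / Gamma (1 + α * k) * ∫ s in (0:ℝ)..t, (t - s) ^ (α - 1) * s ^ (α * k) := by
          rw [← intervalIntegral.integral_const_mul]
          refine intervalIntegral.integral_congr fun s hs => ?_
          rw [uIcc_of_le ht.le] at hs
          simp only [F, neg_pow (s ^ α), rpow_mul_natCast hs.1]
          ring
      _ = _ := by
          rw [integral_sub_rpow_mul_rpow hα hk ht, neg_pow (t ^ α), ← rpow_mul_natCast ht.le]
          push_cast
          rw [show 1 + α * k + α = 1 + α * (k + 1) by ring, show α * k + α = α * (k + 1) by ring,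
            pow_succ]
          field_simp [(hΓ k).ne']
  have hlhs : HasSum (fun k => ∫ s in (0:ℝ)..t, F k s)
      (∫ s in (0:ℝ)..t, (t - s) ^ (α - 1) * mittagLeffler α (-s ^ α)) := by
    refine intervalIntegral.hasSum_integral_of_dominated_convergence
      (fun k s => (t - s) ^ (α - 1) * ((t ^ α) ^ k / Gamma (1 + α * k)))
      (fun k => (by fun_prop : Measurable (F k)).aestronglyMeasurable)
      (fun k => .of_forall fun s hs => ?_)
      (.of_forall fun s _ => (summable_pow_div_Gamma_one_add_mul hα _).mul_left _)
      ?_ (.of_forall fun s _ => (hasSum_mittagLeffler hα _).mul_left _)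
    · rw [uIoc_of_le ht.le] at hs
      have hts : 0 ≤ (t - s) ^ (α - 1) := rpow_nonneg (sub_nonneg.2 hs.2) _
      rw [norm_mul, norm_div, norm_pow, norm_neg, Real.norm_of_nonneg hts,
        Real.norm_of_nonneg (rpow_nonneg hs.1.le _), Real.norm_of_nonneg (hΓ k).le]
      gcongr
      · exact rpow_nonneg hs.1.le _
      · exact hs.1.le
      · exact hs.2
    · simp_rw [tsum_mul_left]
      exact (intervalIntegrable_sub_rpow hα t 0 t).mul_const _
  have hrhs : HasSum (fun k => ∫ s in (0:ℝ)..t, F k s)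
      (Gamma α * (1 - mittagLeffler α (-t ^ α))) := by
    have h := ((hasSum_nat_add_iff' 1).2 (hasSum_mittagLeffler hα (-t ^ α))).mul_left (-Gamma α)
    simp only [Finset.sum_range_one, pow_zero, CharP.cast_eq_zero, mul_zero, add_zero, Gamma_one,
      div_one] at h
    simp_rw [hF]
    rwa [show Gamma α * (1 - mittagLeffler α (-t ^ α))
      = -Gamma α * (mittagLeffler α (-t ^ α) - 1) by ring]
  exact hlhs.unique hrhs

theorem exists_first_nonpos {f : ℝ → ℝ} {a b : ℝ} (hab : a ≤ b) (hf : ContinuousOn f (Icc a b))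
    (ha : 0 < f a) (hb : f b ≤ 0) :
    ∃ t₀ ∈ Ioc a b, f t₀ ≤ 0 ∧ ∀ s ∈ Ico a t₀, 0 < f s := by
  set S := Icc a b ∩ f ⁻¹' Iic 0
  have hS : IsLeast S (sInf S) :=
    (hf.preimage_isClosed_of_isClosed isClosed_Icc isClosed_Iic).isLeast_csInf
      ⟨b, ⟨hab, le_rfl⟩, hb⟩ ⟨a, fun s hs => hs.1.1⟩
  obtain ⟨⟨⟨ha₀, hb₀⟩, hf₀⟩, hmin⟩ := hS
  refine ⟨sInf S, ⟨ha₀.lt_of_ne ?_, hb₀⟩, hf₀, fun s hs => ?_⟩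
  · rintro h
    exact (h ▸ ha).not_ge hf₀
  · by_contra! hfs
    exact hs.2.not_ge (hmin ⟨⟨hs.1, hs.2.le.trans hb₀⟩, hfs⟩)

section Volterra

variable {α c : ℝ} {f : ℝ → ℝ}

theorem mul_sub_le_integral_of_volterra (hα : 0 < α) (hα1 : α ≤ 1) (hf : ContinuousOn f (Ici 0))
    (heq : ∀ t, 0 ≤ t → ∫ s in (0:ℝ)..t, (t - s) ^ (α - 1) * f s = c * (1 - f t))
    {u t : ℝ} (hu : 0 ≤ u) (hut : u ≤ t) (hnonneg : ∀ s ∈ Ioo 0 u, 0 ≤ f s) :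
    c * (f u - f t) ≤ ∫ s in u..t, (t - s) ^ (α - 1) * f s := by
  have ht : 0 ≤ t := hu.trans hut
  have hsplit := intervalIntegral.integral_add_adjacent_intervals
    (intervalIntegrable_sub_rpow_mul hα hf t le_rfl hu)
    (intervalIntegrable_sub_rpow_mul hα hf t hu ht)
  have hmono : ∫ s in (0:ℝ)..u, (t - s) ^ (α - 1) * f s
      ≤ ∫ s in (0:ℝ)..u, (u - s) ^ (α - 1) * f s :=
    intervalIntegral.integral_mono_on_of_le_Ioo hu
      (intervalIntegrable_sub_rpow_mul hα hf t le_rfl hu)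
      (intervalIntegrable_sub_rpow_mul hα hf u le_rfl hu) fun s hs =>
        mul_le_mul_of_nonneg_right
          (rpow_le_rpow_of_nonpos (by linarith [hs.2]) (by linarith) (by linarith))
          (hnonneg s hs)
  rw [heq t ht] at hsplit
  rw [heq u hu] at hmono
  linarith

theorem pos_of_volterra (hα : 0 < α) (hα1 : α ≤ 1) (hc : 0 < c) (hf : ContinuousOn f (Ici 0))
    (heq : ∀ t, 0 ≤ t → ∫ s in (0:ℝ)..t, (t - s) ^ (α - 1) * f s = c * (1 - f t))
    {t : ℝ} (ht : 0 ≤ t) : 0 < f t := by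
  have hf0 : f 0 = 1 := by
    have h := heq 0 le_rfl
    rw [intervalIntegral.integral_same] at h
    nlinarith
  by_contra! hft
  obtain ⟨t₀, ht₀, hft₀, hpos⟩ := exists_first_nonpos ht (hf.mono Icc_subset_Ici_self)
    (hf0 ▸ one_pos) hft
  -- on a short enough interval `[t₀ - ε, t₀]`, the kernel mass `ε ^ α / α` is below `c`
  set ε := min t₀ ((α * c / 2) ^ α⁻¹)
  have hε : 0 < ε := lt_min ht₀.1 (by positivity)
  have hεt₀ : ε ≤ t₀ := min_le_left _ _
  have hεα : ε ^ α / α < c := by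
    have h : ε ^ α ≤ α * c / 2 := by
      calc ε ^ α ≤ ((α * c / 2) ^ α⁻¹) ^ α := rpow_le_rpow hε.le (min_le_right _ _) hα.le
        _ = α * c / 2 := rpow_inv_rpow (by positivity) hα.ne'
    rw [div_lt_iff₀ hα]
    nlinarith
  have hIcc : Icc (t₀ - ε) t₀ ⊆ Ici 0 := fun s hs => mem_Ici.2 (by linarith [hs.1])
  obtain ⟨u, hu, humax⟩ := isCompact_Icc.exists_isMaxOn (nonempty_Icc.2 (by linarith))
    (hf.mono hIcc)
  have hfu : 0 < f u :=
    (hpos _ ⟨by linarith, by linarith⟩).trans_le (humax (left_mem_Icc.2 (by linarith)))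
  have hut₀ : u < t₀ := hu.2.lt_of_ne fun h => by linarith [h ▸ hfu]
  have hu0 : 0 ≤ u := by linarith [hu.1]
  have : c * f u < c * f u :=
    calc c * f u ≤ c * (f u - f t₀) := by nlinarith
      _ ≤ ∫ s in u..t₀, (t₀ - s) ^ (α - 1) * f s :=
        mul_sub_le_integral_of_volterra hα hα1 hf heq hu0 hu.2 fun s hs =>
          (hpos s ⟨hs.1.le, hs.2.trans hut₀⟩).le
      _ ≤ (t₀ - u) ^ α / α * f u :=
        integral_sub_rpow_mul_le hα hu.2 (hf.mono fun s hs => hu0.trans hs.1)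
          fun s hs => humax ⟨hu.1.trans hs.1, hs.2⟩
      _ ≤ ε ^ α / α * f u := by
        gcongr
        linarith [hu.1]
      _ < c * f u := by gcongr
  exact this.false

end Volterra

theorem mittagLeffler_neg_rpow_pos {α t : ℝ} (hα : 0 < α) (hα1 : α ≤ 1) (ht : 0 ≤ t) :
    0 < mittagLeffler α (-t ^ α) :=
  pos_of_volterra hα hα1 (Gamma_pos_of_pos hα)
    ((continuous_mittagLeffler hα).comp (continuous_rpow_const hα.le).neg).continuousOn
    (fun _ hs => integral_sub_rpow_mul_mittagLeffler hα hs) ht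

theorem stmt_17 (α K : ℝ) (hα0 : 0 < α) (hα1 : α ≤ 1) (hK : 0 ≤ K)
    (Sp : ℝ → ℝ)
    (hSp : ∀ t, 0 ≤ t → Sp t ≥ Sp 0 * mittagLeffler α (-K * t ^ α))
    (h0 : 0 < Sp 0) :
    (∀ t, 0 ≤ t → 0 < mittagLeffler α (-K * t ^ α)) ∧
    (∀ t, 0 ≤ t → 0 < Sp t) := by
  have hE : ∀ t, 0 ≤ t → 0 < mittagLeffler α (-K * t ^ α) := fun t ht => by
    have h := mittagLeffler_neg_rpow_pos hα0 hα1 (by positivity : 0 ≤ K ^ α⁻¹ * t)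
    rwa [mul_rpow (by positivity) ht, rpow_inv_rpow hK hα0.ne', ← neg_mul] at h
  exact ⟨hE, fun t ht => (mul_pos h0 (hE t ht)).trans_le (hSp t ht)⟩
end
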